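/- Consider the RRC market with students {s1,s2,s3}, colleges {c1,c2,c3}, one non-empty resource r with region C_r = {c1,c2,c3}, quotas q_{c1} = q_{c2} = q_{c3} = q_r = 1, student preferences s1: (c1,r) ≻ (c1,r0) ≻ (c3,r) ≻ (c2,r0) ≻ (c3,r0) ≻ ∅, s2: (c1,r) ≻ ∅, s3: (c2,r0) ≻ (c1,r0) ≻ ∅ (all other pairs unacceptable), and college priorities c1: s3 ≻ s2 ≻ s1, c2: s1 ≻ s2 ≻ s3, c3: s3 ≻ s1 ≻ s2. Then μ = {(s1,c1,r0),(s3,c2,r0)} is the unique direct-envy stable matching of this market, and μ is not resource-efficient; consequently, no matching in this market is both direct-envy stable and resource-efficient. -/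

import Mathlib

namespace RRC

section Defs

variable (S C R : Type)

/-- A matching market with resource-regional caps (RRC).  Students `S`, colleges `C`,
non-empty resources `R`; the empty resource `r0` is represented by `none : Option R`. -/
structure Market where
  /-- quota of each college -/
  qC : C → ℕ
  qC_pos : ∀ c, 0 < qC c
  /-- quota of each non-empty resource -/
  qR : R → ℕ
  qR_pos : ∀ r, 0 < qR r
  /-- region of each non-empty resource (the region of `r0` is all of `C`) -/
  region : R → Finset C
  region_nonempty : ∀ r, (region r).Nonempty
  /-- strict priority order of each college over students -/
  prC : C → S → S → Prop
  prC_sto : ∀ c, IsStrictTotalOrder S (prC c)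
  /-- strict preference order of each student over `(C × R0) ∪ {∅}`;
  `none` is the outside option `∅` -/
  prS : S → Option (C × Option R) → Option (C × Option R) → Prop
  prS_sto : ∀ s, IsStrictTotalOrder (Option (C × Option R)) (prS s)

/-- A matching: each student appears in at most one contract, so a matching is a
function from students to optional (college, resource) pairs. -/
abbrev Matching := S → Option (C × Option R)

variable {S C R} [DecidableEq S]

/-- Number of contracts of the college `c` in `μ`. -/
noncomputable def collegeCount (μ : Matching S C R) (c : C) : ℕ :=
  {s : S | ∃ r, μ s = some (c, r)}.ncard

/-- Number of contracts containing the non-empty resource `r` in `μ`. -/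
noncomputable def resourceCount (μ : Matching S C R) (r : R) : ℕ :=
  {s : S | ∃ c, μ s = some (c, some r)}.ncard

/-- Feasibility: college quotas, resource quotas, and regions are respected. -/
def Feasible (M : Market S C R) (μ : Matching S C R) : Prop :=
  (∀ c, collegeCount μ c ≤ M.qC c) ∧
  (∀ r, resourceCount μ r ≤ M.qR r) ∧
  (∀ s c r, μ s = some (c, some r) → c ∈ M.region r)

/-- A pair `(c, r)` is acceptable for `s` if `s` prefers it to being unmatched. -/
def Acceptable (M : Market S C R) (s : S) (c : C) (r : Option R) : Prop :=
  M.prS s (some (c, r)) none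

/-- Individual rationality: no unacceptable contract is used. -/
def IndRational (M : Market S C R) (μ : Matching S C R) : Prop :=
  ∀ s x, μ s = some x → M.prS s (some x) none

/-- The contract `(s, c, r) ∉ μ` envy-blocks `μ` through `(s', c, r') ∈ μ`. -/
def EnvyBlocksThrough (M : Market S C R) (μ : Matching S C R)
    (s : S) (c : C) (r : Option R) (s' : S) (r' : Option R) : Prop :=
  μ s ≠ some (c, r) ∧ μ s' = some (c, r') ∧
  M.prS s (some (c, r)) (μ s) ∧ M.prC c s s' ∧
  Feasible M (Function.update (Function.update μ s' none) s (some (c, r)))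

def EnvyBlocks (M : Market S C R) (μ : Matching S C R)
    (s : S) (c : C) (r : Option R) : Prop :=
  ∃ s' r', EnvyBlocksThrough M μ s c r s' r'

def EnvyFree (M : Market S C R) (μ : Matching S C R) : Prop :=
  ∀ s c r, ¬ EnvyBlocks M μ s c r

/-- The contract `(s, c, r) ∉ μ` waste-blocks `μ`. -/
def WasteBlocks (M : Market S C R) (μ : Matching S C R)
    (s : S) (c : C) (r : Option R) : Prop :=
  μ s ≠ some (c, r) ∧ M.prS s (some (c, r)) (μ s) ∧
  Feasible M (Function.update μ s (some (c, r)))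

def NonWasteful (M : Market S C R) (μ : Matching S C R) : Prop :=
  ∀ s c r, ¬ WasteBlocks M μ s c r

/-- Stability: feasible, individually rational, no envy-blocking and no
waste-blocking contract. -/
def Stable (M : Market S C R) (μ : Matching S C R) : Prop :=
  Feasible M μ ∧ IndRational M μ ∧ EnvyFree M μ ∧ NonWasteful M μ

/-- `(s, c, r)` direct-envy-blocks `μ`: it envy-blocks through some `(s', c, r')`
with `r ∈ {r', r0}`. -/
def DirectEnvyBlocks (M : Market S C R) (μ : Matching S C R)
    (s : S) (c : C) (r : Option R) : Prop :=
  ∃ s' r', EnvyBlocksThrough M μ s c r s' r' ∧ (r = r' ∨ r = none)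

/-- The waste-blocking contract `(s, c, r)` is dominated by `(s', c, r') ∉ μ`. -/
def Dominates (M : Market S C R) (μ : Matching S C R)
    (s : S) (c : C) (r : Option R) (s' : S) (r' : Option R) : Prop :=
  μ s' ≠ some (c, r') ∧
  ¬ WasteBlocks M μ s' c r' ∧ ¬ DirectEnvyBlocks M μ s' c r' ∧
  DirectEnvyBlocks M (Function.update μ s (some (c, r))) s' c r'

/-- Direct-envy stability: feasible, individually rational, no direct-envy-blocking
contract, and every waste-blocking contract is dominated. -/
def DirectEnvyStable (M : Market S C R) (μ : Matching S C R) : Prop :=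
  Feasible M μ ∧ IndRational M μ ∧
  (∀ s c r, ¬ DirectEnvyBlocks M μ s c r) ∧
  (∀ s c r, WasteBlocks M μ s c r → ∃ s' r', Dominates M μ s c r s' r')

/-- Weak stability: no direct-envy-blocking contract, and every waste-blocking
contract involves a non-empty resource whose quota is fully used. -/
def WeaklyStable (M : Market S C R) (μ : Matching S C R) : Prop :=
  Feasible M μ ∧ IndRational M μ ∧
  (∀ s c r, ¬ DirectEnvyBlocks M μ s c r) ∧
  (∀ s c (r : Option R), WasteBlocks M μ s c r →
    ∃ r₁, r = some r₁ ∧ resourceCount μ r₁ = M.qR r₁)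

/-- A waste-blocking contract is resource-blocking if the student is already
admitted to the same college. -/
def ResourceBlocks (M : Market S C R) (μ : Matching S C R)
    (s : S) (c : C) (r : Option R) : Prop :=
  WasteBlocks M μ s c r ∧ ∃ r', μ s = some (c, r')

/-- A waste-blocking contract is seat-blocking if the student is not admitted to
the same college. -/
def SeatBlocks (M : Market S C R) (μ : Matching S C R)
    (s : S) (c : C) (r : Option R) : Prop :=
  WasteBlocks M μ s c r ∧ ¬ ∃ r', μ s = some (c, r')

def ResourceEfficient (M : Market S C R) (μ : Matching S C R) : Prop :=
  ∀ s c r, ¬ ResourceBlocks M μ s c r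

def SeatEfficient (M : Market S C R) (μ : Matching S C R) : Prop :=
  ∀ s c r, ¬ SeatBlocks M μ s c r

end Defs

section Cutoffs

variable {S C R : Type} [Fintype S]

/-- A cutoff profile: one cutoff per (college, resource) pair, bounded by the
number of students, with the cutoff for the empty resource the largest. -/
def IsCutoffProfile (St : Type) [Fintype St] {Co Re : Type}
    (K : Co → Option Re → ℕ) : Prop :=
  (∀ c r, K c r ≤ Fintype.card St) ∧ ∀ c (r : Re), K c (some r) ≤ K c none

/-- Rank of student `s` in the priority order of college `c` (0 = best). -/
noncomputable def studentRank (M : Market S C R) (c : C) (s : S) : ℕ :=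
  {s' : S | M.prC c s' s}.ncard

/-- `(s, c, r)` is permitted by the cutoff profile `K` if `s` is among the top
`K c r` students of `c`'s priority order. -/
noncomputable def Permitted (M : Market S C R) (K : C → Option R → ℕ)
    (s : S) (c : C) (r : Option R) : Prop :=
  studentRank M c s < K c r

/-- `μ` is the matching induced by the cutoff profile `K`: every student gets
their most preferred acceptable permitted contract, if any. -/
def IsInduced (M : Market S C R) (K : C → Option R → ℕ) (μ : Matching S C R) : Prop :=
  ∀ s : S,
    (∀ c r, μ s = some (c, r) →
      Permitted M K s c r ∧ Acceptable M s c r ∧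
      ∀ c' r', Permitted M K s c' r' → Acceptable M s c' r' →
        (c', r') ≠ (c, r) → M.prS s (some (c, r)) (some (c', r'))) ∧
    (μ s = none → ∀ c r, ¬ (Permitted M K s c r ∧ Acceptable M s c r))

/-- `K + 1_r^c`: increase the cutoff of `(c, r)` by one (simultaneously increasing
the cutoff of `(c, r0)` if it was equal to that of `(c, r)`). -/
def bump [DecidableEq C] [DecidableEq R] (K : C → Option R → ℕ)
    (c : C) (r : Option R) : C → Option R → ℕ :=
  fun c' r' =>
    if c' = c ∧ (r' = r ∨ (r' = none ∧ r ≠ none ∧ K c none = K c r)) then K c' r' + 1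
    else K c' r'

/-- An optimal cutoff profile: the induced matching is feasible, and increasing any
non-maximal cutoff yields an infeasible induced matching. -/
def OptimalCutoffs [DecidableEq C] [DecidableEq R]
    (M : Market S C R) (K : C → Option R → ℕ) : Prop :=
  IsCutoffProfile S K ∧
  (∀ μ, IsInduced M K μ → Feasible M μ) ∧
  ∀ c r, K c r < Fintype.card S →
    ∀ μ', IsInduced M (bump K c r) μ' → ¬ Feasible M μ'

end Cutoffs

section SD

variable {S C R : Type} [DecidableEq S]

/-- `x` is the most preferred contract of the (unmatched) student `s` given the
current matching `μ`: the best acceptable contract keeping the matching feasible,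
or `none` if there is no such contract. -/
def BestChoice (M : Market S C R) (μ : Matching S C R) (s : S)
    (x : Option (C × Option R)) : Prop :=
  match x with
  | some (c, r) =>
      Acceptable M s c r ∧ Feasible M (Function.update μ s (some (c, r))) ∧
      ∀ c' r', Acceptable M s c' r' → Feasible M (Function.update μ s (some (c', r'))) →
        (c', r') = (c, r) ∨ M.prS s (some (c, r)) (some (c', r'))
  | none => ∀ c r, ¬ (Acceptable M s c r ∧ Feasible M (Function.update μ s (some (c, r))))

/-- A run of the serial dictatorship mechanism on a list of students:
`SDRun M l μ μ'` holds if starting from `μ` and processing the students of `l`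
in order, each one receiving their most preferred feasible acceptable contract,
yields `μ'`. -/
inductive SDRun (M : Market S C R) : List S → Matching S C R → Matching S C R → Prop
  | nil (μ : Matching S C R) : SDRun M [] μ μ
  | cons (s : S) (l : List S) (μ : Matching S C R) (x : Option (C × Option R))
      (μ' : Matching S C R) (hx : BestChoice M μ s x)
      (h : SDRun M l (Function.update μ s x) μ') : SDRun M (s :: l) μ μ'

/-- Student `s` weakly prefers `x` to `y`. -/
def WeaklyPrefers (M : Market S C R) (s : S) (x y : Option (C × Option R)) : Prop :=
  x = y ∨ M.prS s x y

/-- Pareto efficiency for students. -/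
def ParetoEfficient (M : Market S C R) (μ : Matching S C R) : Prop :=
  ¬ ∃ μ' : Matching S C R, Feasible M μ' ∧
    (∀ s, WeaklyPrefers M s (μ' s) (μ s)) ∧ ∃ s, M.prS s (μ' s) (μ s)

end SD

/-- A strict total order induced by an injective rank function (rank 0 = best). -/
lemma isStrictTotalOrder_of_rank {α : Type*} (f : α → ℕ) (hf : Function.Injective f) :
    IsStrictTotalOrder α (fun x y => f x < f y) where
  trichotomous a b h1 h2 := hf (le_antisymm (not_lt.mp h2) (not_lt.mp h1))
  irrefl a := lt_irrefl (f a)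
  trans a b c h1 h2 := lt_trans h1 h2

end RRC

namespace RRC

namespace Example2

/-! The market of Proposition 2 (impossibility of resource-efficiency): students
`s1 = 0`, `s2 = 1`, `s3 = 2`; colleges `c1 = 0`, `c2 = 1`, `c3 = 2`; one non-empty
resource `r = some ()` whose region contains all three colleges; all quotas one.
Preferences (best first):
* `s1 : (c1,r), (c1,r0), (c3,r), (c2,r0), (c3,r0), ∅`;
* `s2 : (c1,r), ∅`;
* `s3 : (c2,r0), (c1,r0), ∅`;
* `c1 : s3, s2, s1`;  `c2 : s1, s2, s3`;  `c3 : s3, s1, s2`. -/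

/-- Rank of each pair/outside option for each student (0 = best; values above the
rank of `∅` correspond to unacceptable pairs). -/
def rkS : Fin 3 → Option (Fin 3 × Option Unit) → ℕ := fun s x =>
  if s = 0 then
    if x = some (0, some ()) then 0
    else if x = some (0, none) then 1
    else if x = some (2, some ()) then 2
    else if x = some (1, none) then 3
    else if x = some (2, none) then 4
    else if x = none then 5
    else 6
  else if s = 1 then
    if x = some (0, some ()) then 0
    else if x = none then 1
    else if x = some (0, none) then 2
    else if x = some (1, some ()) then 3
    else if x = some (1, none) then 4
    else if x = some (2, some ()) then 5
    else 6
  else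
    if x = some (1, none) then 0
    else if x = some (0, none) then 1
    else if x = none then 2
    else if x = some (0, some ()) then 3
    else if x = some (1, some ()) then 4
    else if x = some (2, some ()) then 5
    else 6

/-- Rank of each student for each college (0 = best). -/
def rkC : Fin 3 → Fin 3 → ℕ := fun c s =>
  if c = 0 then 2 - (s : ℕ)                       -- c1 : s3 ≻ s2 ≻ s1
  else if c = 1 then (s : ℕ)                      -- c2 : s1 ≻ s2 ≻ s3
  else if s = 2 then 0 else if s = 0 then 1 else 2 -- c3 : s3 ≻ s1 ≻ s2

lemma rkS_inj : ∀ s, Function.Injective (rkS s) := by decide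
lemma rkC_inj : ∀ c, Function.Injective (rkC c) := by decide

/-- The RRC market of Proposition 2. -/
def mkt : Market (Fin 3) (Fin 3) Unit where
  qC := fun _ => 1
  qC_pos := fun _ => Nat.one_pos
  qR := fun _ => 1
  qR_pos := fun _ => Nat.one_pos
  region := fun _ => Finset.univ
  region_nonempty := fun _ => Finset.univ_nonempty
  prC := fun c s s' => rkC c s < rkC c s'
  prC_sto := fun c => isStrictTotalOrder_of_rank (rkC c) (rkC_inj c)
  prS := fun s x y => rkS s x < rkS s y
  prS_sto := fun s => isStrictTotalOrder_of_rank (rkS s) (rkS_inj s)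

/-- The matching `{(s1,c1,r0), (s3,c2,r0)}`. -/
def μStar : Matching (Fin 3) (Fin 3) Unit := fun s =>
  if s = 0 then some (0, none) else if s = 2 then some (1, none) else none

end Example2

theorem collegeCount_eq_card_filter {S C R : Type} [Fintype S] [DecidableEq C] [Fintype R]
    [DecidableEq R] (μ : Matching S C R) (c : C) :
    collegeCount μ c = (Finset.univ.filter fun s => ∃ r, μ s = some (c, r)).card := by
  rw [collegeCount, ← Set.ncard_coe_finset, Finset.coe_filter_univ]

theorem resourceCount_eq_card_filter {S C R : Type} [Fintype S] [Fintype C] [DecidableEq C]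
    [DecidableEq R] (μ : Matching S C R) (r : R) :
    resourceCount μ r = (Finset.univ.filter fun s => ∃ c, μ s = some (c, some r)).card := by
  rw [resourceCount, ← Set.ncard_coe_finset, Finset.coe_filter_univ]

section Decidability

variable {S C R : Type} [Fintype S] [DecidableEq S] [Fintype C] [DecidableEq C]
  [Fintype R] [DecidableEq R] (M : Market S C R)
  [∀ s, DecidableRel (M.prS s)] [∀ c, DecidableRel (M.prC c)]

instance (μ : Matching S C R) : Decidable (Feasible M μ) :=
  decidable_of_iff
    ((∀ c, (Finset.univ.filter fun s => ∃ r, μ s = some (c, r)).card ≤ M.qC c) ∧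
      (∀ r, (Finset.univ.filter fun s => ∃ c, μ s = some (c, some r)).card ≤ M.qR r) ∧
      (∀ s c r, μ s = some (c, some r) → c ∈ M.region r))
    (by simp only [Feasible, collegeCount_eq_card_filter, resourceCount_eq_card_filter])

instance (μ : Matching S C R) : Decidable (IndRational M μ) := by
  unfold IndRational; infer_instance

instance (μ : Matching S C R) (s : S) (c : C) (r : Option R) (s' : S) (r' : Option R) :
    Decidable (EnvyBlocksThrough M μ s c r s' r') := by
  unfold EnvyBlocksThrough; infer_instance

instance (μ : Matching S C R) (s : S) (c : C) (r : Option R) :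
    Decidable (DirectEnvyBlocks M μ s c r) := by
  unfold DirectEnvyBlocks; infer_instance

instance (μ : Matching S C R) (s : S) (c : C) (r : Option R) :
    Decidable (WasteBlocks M μ s c r) := by
  unfold WasteBlocks; infer_instance

instance (μ : Matching S C R) (s : S) (c : C) (r : Option R) (s' : S) (r' : Option R) :
    Decidable (Dominates M μ s c r s' r') := by
  unfold Dominates; infer_instance

instance (μ : Matching S C R) : Decidable (DirectEnvyStable M μ) := by
  unfold DirectEnvyStable; infer_instance

end Decidability

namespace Example2

instance (s : Fin 3) : DecidableRel (mkt.prS s) :=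
  fun x y => inferInstanceAs (Decidable (rkS s x < rkS s y))

instance (c : Fin 3) : DecidableRel (mkt.prC c) :=
  fun s s' => inferInstanceAs (Decidable (rkC c s < rkC c s'))

theorem directEnvyStable_μStar : DirectEnvyStable mkt μStar := by
  decide

-- An exhaustive check over all 7 ^ 3 matchings of the market.
set_option maxRecDepth 10000 in
theorem eq_μStar_of_directEnvyStable :
    ∀ μ : Matching (Fin 3) (Fin 3) Unit, DirectEnvyStable mkt μ → μ = μStar := by
  decide

-- `s1` holds `(c1, r0)` and may switch to their top choice `(c1, r)`, since `r` is unused.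
theorem resourceBlocks_μStar : ResourceBlocks mkt μStar 0 0 (some ()) :=
  ⟨by decide, none, rfl⟩

/-- `μStar = {(s1,c1,r0),(s3,c2,r0)}` is the unique direct-envy
stable matching of this market, it is not resource-efficient, and consequently no
matching of this market is both direct-envy stable and resource-efficient. -/
theorem unique_directEnvyStable_not_resourceEfficient :
    (∀ μ : Matching (Fin 3) (Fin 3) Unit, DirectEnvyStable mkt μ ↔ μ = μStar) ∧
    ¬ ResourceEfficient mkt μStar ∧
    (∀ μ : Matching (Fin 3) (Fin 3) Unit,
      ¬ (DirectEnvyStable mkt μ ∧ ResourceEfficient mkt μ)) := by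
  have hunique (μ : Matching (Fin 3) (Fin 3) Unit) : DirectEnvyStable mkt μ ↔ μ = μStar :=
    ⟨eq_μStar_of_directEnvyStable μ, fun h => h ▸ directEnvyStable_μStar⟩
  have hnotEfficient : ¬ ResourceEfficient mkt μStar := fun h => h 0 0 (some ()) resourceBlocks_μStar
  refine ⟨hunique, hnotEfficient, fun μ ⟨hstable, hefficient⟩ => ?_⟩
  exact hnotEfficient ((hunique μ).mp hstable ▸ hefficient)

end Example2

end RRC
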